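/- Let xs < xt be integers, C ≥ 0 a real number, and f : ℤ → ℝ a function satisfying the Ameso(C) condition on [xs,xt]. Suppose there exist x0 ∈ [xs,xt] and a positive integer b with xs ≤ x0 − b such that (a) f(x0) = min over y ∈ [x0−b, x0] of f(y), and (b) f(x0) + C ≤ max over y ∈ [x0−b, x0] of f(y). Let w be the smallest element of [x0−b, x0] at which f attains its maximum over [x0−b, x0]. Then 2·w < 2·x0 − b (i.e., w lies in the left half-open interval [x0 − b, x0 − b/2)). -/

import Mathlib

/-- Ceiling of `(x+y)/2` as a rational. -/
def mceil (x y : ℤ) : ℤ := ⌈((x : ℚ) + (y : ℚ)) / 2⌉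

/-- Floor of `(x+y)/2` as a rational. -/
def mfloor (x y : ℤ) : ℤ := ⌊((x : ℚ) + (y : ℚ)) / 2⌋

/-!
If the least maximizer `w` sat in the right half, its reflection `x' = 2w - x0` through `x0`
would lie in `[x0 - b, x0]` and have `w` as exact midpoint of `x'` and `x0`, so Ameso(C) gives
`2 f(w) ≤ f(x') + f(x0) + C ≤ f(x') + f(w)`. Hence `x'` is a maximizer too, and minimality of `w`
forces `w ≤ x' = 2w - x0`, i.e. `w = x0`. But then `f(x0)` is both the minimum and the maximum,
so `x0 - b` is a smaller maximizer.
-/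

lemma mceil_of_add_eq_two_mul {x y m : ℤ} (h : x + y = 2 * m) : mceil x y = m := by
  have hq : ((x : ℚ) + y) / 2 = m := by rw [← Int.cast_add, h]; push_cast; ring
  rw [mceil, hq, Int.ceil_intCast]

lemma mfloor_of_add_eq_two_mul {x y m : ℤ} (h : x + y = 2 * m) : mfloor x y = m := by
  have hq : ((x : ℚ) + y) / 2 = m := by rw [← Int.cast_add, h]; push_cast; ring
  rw [mfloor, hq, Int.floor_intCast]

lemma two_mul_le_of_ameso_of_add_eq_two_mul {f : ℤ → ℝ} {C : ℝ} {x y m : ℤ}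
    (hAmeso : f x + f y + C ≥ f (mceil x y) + f (mfloor x y)) (h : x + y = 2 * m) :
    2 * f m ≤ f x + f y + C := by
  rw [mceil_of_add_eq_two_mul h, mfloor_of_add_eq_two_mul h] at hAmeso
  linarith

/-- Lemma 4: if `f(x0)` is the minimum of `f` on `[x0-b, x0]` and
`f(x0) + C ≤ max_{[x0-b, x0]} f`, then the smallest maximizer `w` of `f` on `[x0-b, x0]`
lies in the left half `[x0 - b, x0 - b/2)`, i.e. `2w < 2x0 - b`. -/
theorem ameso_leftnarrow_local
    (xs xt : ℤ) (C : ℝ) (f : ℤ → ℝ)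
    (hAmeso : ∀ x ∈ Finset.Icc xs xt, ∀ y ∈ Finset.Icc xs xt,
      f x + f y + C ≥ f (mceil x y) + f (mfloor x y))
    (x0 : ℤ) (hx0r : x0 ≤ xt)
    (b : ℤ) (hb : 0 < b) (hbs : xs ≤ x0 - b)
    (hmin : f x0 = (Finset.Icc (x0 - b) x0).inf' (Finset.nonempty_Icc.2 (by omega)) f)
    (hmax : f x0 + C ≤ (Finset.Icc (x0 - b) x0).sup' (Finset.nonempty_Icc.2 (by omega)) f)
    (w : ℤ) (hw : w ∈ Finset.Icc (x0 - b) x0)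
    (hwmax : f w = (Finset.Icc (x0 - b) x0).sup' (Finset.nonempty_Icc.2 (by omega)) f)
    (hwsmallest : ∀ v ∈ Finset.Icc (x0 - b) x0, f v = f w → w ≤ v) :
    2 * w < 2 * x0 - b := by
  by_contra! hright
  obtain ⟨hwl, hwr⟩ := Finset.mem_Icc.1 hw
  have hle_w : ∀ v ∈ Finset.Icc (x0 - b) x0, f v ≤ f w := fun v hv =>
    hwmax ▸ Finset.le_sup' f hv
  have hx' : 2 * w - x0 ∈ Finset.Icc (x0 - b) x0 := Finset.mem_Icc.2 ⟨by omega, by omega⟩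
  have hmid : 2 * f w ≤ f (2 * w - x0) + f x0 + C :=
    two_mul_le_of_ameso_of_add_eq_two_mul
      (hAmeso _ (Finset.mem_Icc.2 ⟨by omega, by omega⟩) _ (Finset.mem_Icc.2 ⟨by omega, hx0r⟩))
      (by ring)
  have hx'_max : f (2 * w - x0) = f w := le_antisymm (hle_w _ hx') (by linarith)
  have hw_eq : w = x0 := by
    have := hwsmallest _ hx' hx'_max
    omega
  have hleft : x0 - b ∈ Finset.Icc (x0 - b) x0 := Finset.mem_Icc.2 ⟨le_rfl, by omega⟩
  have hleft_max : f (x0 - b) = f w :=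
    le_antisymm (hle_w _ hleft) (by rw [hw_eq, hmin]; exact Finset.inf'_le f hleft)
  have := hwsmallest _ hleft hleft_max
  omega
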